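/- arXiv:1911.05411 — 5 statements merged into one kernel-verified Lean document; each statement's English description precedes it below -/
import Mathlib

section
/- Sivaramakrishnan's identity: Let m, n, t be positive integers with m∣t and n∣t, and let n₁ be the largest divisor d of n with gcd(d,m)=1. Then ∑_{a=1, gcd(a,m)=1}^{t} gcd(a-1,n) = (t·φ(m)·τ(n)/m) · ∏_{p^ν ∥ n₁} (1 - ν/((ν+1)p)), where the product is over prime powers exactly dividing n₁. -/
/-!
Writing `gcd (a - 1) n = ∑_{d ∣ n, d ∣ a - 1} φ d` turns the sum into `∑_{d ∣ n} φ d * N d`, where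
`N d` counts the `a ≤ t` prime to `m` with `a ≡ 1 (mod d)`. The units of `ZMod t` surject onto
those of `ZMod d`, and multiplying by them permutes the residues prime to `m`, so the `a` prime to
`m` are equidistributed over the unit classes mod `d`: `φ d * N d` counts the `a ≤ t` prime to
both `m` and `d`. Write `n = n₁ * n₂`; by maximality of `n₁` every prime factor of `n₂` divides `m`,
so for `d = d₁ * d₂` this is the number of `a ≤ t` prime to `d₁ * m`, i.e. `t φ(d₁) φ(m) / (d₁ m)`.
Summing over `d₂ ∣ n₂` contributes `τ(n₂)`, and the multiplicative sum
`∑_{d₁ ∣ n₁} φ(d₁) / d₁ = ∏_{p^ν ∥ n₁} (1 + ν (1 - 1/p))` equals `τ(n₁) ∏ (1 - ν / ((ν + 1) p))`.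
-/

open Finset Nat

theorem sum_divisors_mul_of_coprime {M : Type*} [AddCommMonoid M] {a b : ℕ}
    (hab : a.Coprime b) (f : ℕ → M) :
    ∑ d ∈ (a * b).divisors, f d = ∑ d₁ ∈ a.divisors, ∑ d₂ ∈ b.divisors, f (d₁ * d₂) := by
  rw [← sum_product' (f := fun d₁ d₂ => f (d₁ * d₂)), hab.divisors_mul, sum_map]
  exact sum_attach _ (fun p : ℕ × ℕ => f (p.1 * p.2))

theorem divisors_gcd_eq_filter_dvd (b : ℕ) {n : ℕ} (hn : n ≠ 0) :
    (b.gcd n).divisors = {d ∈ n.divisors | d ∣ b} := by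
  ext d
  simp only [Nat.mem_divisors, Nat.dvd_gcd_iff, mem_filter, ne_eq, Nat.gcd_eq_zero_iff, hn,
    and_false, not_false_eq_true, and_true]
  tauto

theorem sum_gcd_eq_sum_totient_mul_card {ι : Type*} (s : Finset ι) (f : ι → ℕ) {n : ℕ}
    (hn : n ≠ 0) :
    ∑ i ∈ s, (f i).gcd n = ∑ d ∈ n.divisors, φ d * #{i ∈ s | d ∣ f i} := by
  calc ∑ i ∈ s, (f i).gcd n = ∑ i ∈ s, ∑ d ∈ n.divisors, if d ∣ f i then φ d else 0 := by
        refine sum_congr rfl fun i _ => ?_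
        rw [← sum_filter, ← divisors_gcd_eq_filter_dvd _ hn, Nat.sum_totient]
    _ = ∑ d ∈ n.divisors, φ d * #{i ∈ s | d ∣ f i} := by
        rw [sum_comm]
        simp_rw [card_filter, mul_sum, mul_ite, mul_one, mul_zero]

theorem card_filter_Icc_eq_card_filter_zmod (t : ℕ) [NeZero t] (P : ZMod t → Prop)
    [DecidablePred P] : #{a ∈ Icc (1 : ℕ) t | P (a : ℕ)} = #{x : ZMod t | P x} := by
  refine card_nbij' (fun a => (a : ZMod t)) (fun x : ZMod t => (x - 1).val + 1) ?_ ?_ ?_ ?_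
  · intro a ha
    simp_all
  · intro x hx
    simp only [coe_filter, mem_univ, true_and, Set.mem_ofPred_eq, mem_Icc] at hx ⊢
    refine ⟨⟨by omega, (x - 1).val_lt⟩, ?_⟩
    simpa using hx
  · intro a ha
    simp only [coe_filter, mem_Icc, Set.mem_ofPred_eq] at ha
    have hsub : (a : ZMod t) - 1 = ((a - 1 : ℕ) : ZMod t) := by
      rw [Nat.cast_sub ha.1.1, Nat.cast_one]
    show ((a : ZMod t) - 1).val + 1 = a
    rw [hsub, ZMod.val_cast_of_lt (by omega)]
    omega
  · intro x _
    simp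

theorem card_filter_isUnit_eq_card_units_mul {R S : Type*} [CommMonoid R] [Fintype R]
    [CommMonoid S] [Fintype Sˣ] [DecidableEq S] [DecidablePred (IsUnit : S → Prop)]
    (g : R →* S) (hg : Function.Surjective (Units.map g)) (Q : R → Prop) [DecidablePred Q]
    (hQ : ∀ (v : Rˣ) (x : R), Q (v * x) ↔ Q x) :
    #{x | Q x ∧ IsUnit (g x)} = Fintype.card Sˣ * #{x | Q x ∧ g x = 1} := by
  have hfiber : ∀ u : Sˣ, #{x ∈ {x | Q x ∧ IsUnit (g x)} | g x = u} = #{x | Q x ∧ g x = 1} := by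
    intro u
    obtain ⟨v, hv⟩ := hg u
    have hgv : g v = u := congrArg Units.val hv
    refine card_nbij' (fun x => ↑v⁻¹ * x) (fun x => ↑v * x) ?_ ?_ ?_ ?_
    · intro x hx
      simp only [coe_filter, mem_filter, mem_univ, true_and, Set.mem_ofPred_eq] at hx ⊢
      refine ⟨(hQ _ _).2 hx.1.1, ?_⟩
      rw [map_mul, hx.2, ← hgv, ← map_mul, Units.inv_mul, map_one]
    · intro x hx
      simp only [coe_filter, mem_filter, mem_univ, true_and, Set.mem_ofPred_eq] at hx ⊢
      refine ⟨⟨(hQ _ _).2 hx.1, ?_⟩, ?_⟩ <;> rw [map_mul, hx.2, mul_one, hgv]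
      exact u.isUnit
    · intro x _
      simp
    · intro x _
      simp
  rw [card_eq_sum_card_fiberwise (f := g) (t := univ.map ⟨Units.val, Units.val_injective⟩),
    sum_map]
  · simp only [Function.Embedding.coeFn_mk, hfiber, sum_const, smul_eq_mul]
    rfl
  · intro x hx
    obtain ⟨u, hu⟩ := (mem_filter.1 hx).2.2
    exact mem_map.2 ⟨u, mem_univ _, hu⟩

theorem ZMod.natCast_eq_one_iff_dvd_sub_one {a : ℕ} (d : ℕ) (ha : 1 ≤ a) :
    (a : ZMod d) = 1 ↔ d ∣ a - 1 := by
  rw [← Nat.cast_one, ZMod.natCast_eq_natCast_iff, Nat.ModEq.comm, Nat.modEq_iff_dvd' ha]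

theorem totient_mul_card_filter_dvd_sub_one {t m d : ℕ} (ht : t ≠ 0) (hm : m ∣ t) (hd : d ∣ t) :
    φ d * #{a ∈ Icc 1 t | a.Coprime m ∧ d ∣ a - 1} =
      #{a ∈ Icc 1 t | a.Coprime m ∧ a.Coprime d} := by
  have : NeZero t := ⟨ht⟩
  have : NeZero d := ⟨fun h => ht (Nat.eq_zero_of_zero_dvd (h ▸ hd))⟩
  classical
  set πm := ZMod.castHom hm (ZMod m)
  set πd := ZMod.castHom hd (ZMod d)
  have hQ : ∀ (v : (ZMod t)ˣ) (x : ZMod t), IsUnit (πm (v * x)) ↔ IsUnit (πm x) := fun v x => by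
    rw [map_mul, IsUnit.mul_iff, and_iff_right (v.isUnit.map πm)]
  have hcount := card_filter_isUnit_eq_card_units_mul (πd : ZMod t →* ZMod d)
    (ZMod.unitsMap_surjective hd) (fun x => IsUnit (πm x)) hQ
  rw [ZMod.card_units_eq_totient] at hcount
  have hlhs : #{a ∈ Icc 1 t | a.Coprime m ∧ d ∣ a - 1} =
      #{a ∈ Icc 1 t | IsUnit (πm (a : ℕ)) ∧ πd (a : ℕ) = 1} := by
    refine congrArg card (filter_congr fun a ha => ?_)
    rw [map_natCast, map_natCast, ZMod.isUnit_iff_coprime,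
      ZMod.natCast_eq_one_iff_dvd_sub_one d (mem_Icc.1 ha).1]
  have hrhs : #{a ∈ Icc 1 t | a.Coprime m ∧ a.Coprime d} =
      #{a ∈ Icc 1 t | IsUnit (πm (a : ℕ)) ∧ IsUnit (πd (a : ℕ))} := by
    refine congrArg card (filter_congr fun a _ => ?_)
    rw [map_natCast, map_natCast, ZMod.isUnit_iff_coprime, ZMod.isUnit_iff_coprime]
  rw [hlhs, hrhs, card_filter_Icc_eq_card_filter_zmod t (fun x => IsUnit (πm x) ∧ πd x = 1),
    card_filter_Icc_eq_card_filter_zmod t (fun x => IsUnit (πm x) ∧ IsUnit (πd x))]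
  exact hcount.symm

theorem card_filter_coprime_Icc_mul (k L : ℕ) : #{a ∈ Icc 1 (k * L) | a.Coprime L} = k * φ L := by
  induction k with
  | zero => simp
  | succ k ih =>
    have hsplit : Icc 1 ((k + 1) * L) = Icc 1 (k * L) ∪ Ico (k * L + 1) (k * L + 1 + L) := by
      ext a
      simp only [mem_union, mem_Icc, mem_Ico, add_mul, one_mul]
      omega
    have hdisj : Disjoint (Icc 1 (k * L)) (Ico (k * L + 1) (k * L + 1 + L)) := by
      rw [disjoint_left]
      intro a ha hb
      simp only [mem_Icc, mem_Ico] at ha hb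
      omega
    rw [hsplit, filter_union, card_union_of_disjoint (disjoint_filter_filter hdisj), ih,
      filter_congr fun a _ => Nat.coprime_comm (n := a) (m := L),
      Nat.filter_coprime_Ico_eq_totient]
    ring

theorem Nat.Coprime.coprime_of_forall_prime_dvd {a b c : ℕ} (h : a.Coprime b)
    (hc : ∀ p, p.Prime → p ∣ c → p ∣ b) : a.Coprime c :=
  Nat.coprime_of_dvd fun p hp hpa hpc =>
    hp.one_lt.ne' (Nat.eq_one_of_dvd_coprimes h hpa (hc p hp hpc))

theorem totient_mul_card_filter_dvd_sub_one_eq {t m d₁ d₂ : ℕ} (ht : t ≠ 0) (hm : m ∣ t)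
    (hd : d₁ * d₂ ∣ t) (hd₁ : d₁.Coprime m) (hd₂ : ∀ p, p.Prime → p ∣ d₂ → p ∣ m) :
    (φ (d₁ * d₂) * #{a ∈ Icc 1 t | a.Coprime m ∧ d₁ * d₂ ∣ a - 1} : ℚ) =
      t * φ m / m * (φ d₁ / d₁) := by
  have hcop : ∀ a : ℕ, a.Coprime m ∧ a.Coprime (d₁ * d₂) ↔ a.Coprime (d₁ * m) := fun a => by
    rw [Nat.coprime_mul_iff_right, Nat.coprime_mul_iff_right]
    exact ⟨fun h => ⟨h.2.1, h.1⟩, fun h => ⟨h.2, h.1, h.2.coprime_of_forall_prime_dvd hd₂⟩⟩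
  rw [← Nat.cast_mul, totient_mul_card_filter_dvd_sub_one ht hm hd,
    filter_congr fun a _ => hcop a]
  obtain ⟨k, rfl⟩ : d₁ * m ∣ t := hd₁.mul_dvd_of_dvd_of_dvd (dvd_of_mul_right_dvd hd) hm
  have hd₁m : (d₁ : ℚ) ≠ 0 ∧ (m : ℚ) ≠ 0 := by
    simpa only [Nat.cast_ne_zero, ← not_or, ← mul_eq_zero] using left_ne_zero_of_mul ht
  rw [mul_comm (d₁ * m) k, card_filter_coprime_Icc_mul, Nat.totient_mul hd₁]
  push_cast
  field_simp [hd₁m.1, hd₁m.2]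

theorem prime_dvd_of_dvd_cofactor {m n₁ n₂ : ℕ} (hn₁ : n₁ ≠ 0) (hc : n₁.Coprime m)
    (hmax : ∀ d, d ∣ n₁ * n₂ → d.Coprime m → d ≤ n₁) {p : ℕ} (hp : p.Prime) (hpn₂ : p ∣ n₂) :
    p ∣ m := by
  by_contra hpm
  have hle := hmax (n₁ * p) (mul_dvd_mul_left n₁ hpn₂)
    (hc.mul_left ((Nat.Prime.coprime_iff_not_dvd hp).2 hpm))
  exact (lt_mul_of_one_lt_right (Nat.pos_of_ne_zero hn₁) hp.one_lt).not_ge hle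

theorem sum_totient_div_prime_pow {p : ℕ} (hp : p.Prime) (k : ℕ) :
    ∑ d ∈ (p ^ k).divisors, (φ d : ℚ) / d = 1 + k * (1 - (p : ℚ)⁻¹) := by
  have hp0 : (p : ℚ) ≠ 0 := Nat.cast_ne_zero.2 hp.ne_zero
  have hterm : ∀ i ∈ range k, (φ (p ^ (i + 1)) : ℚ) / ↑(p ^ (i + 1)) = 1 - (p : ℚ)⁻¹ := by
    intro i _
    rw [Nat.totient_prime_pow_succ hp, Nat.cast_mul, Nat.cast_sub hp.one_le]
    field_simp
    push_cast
    ring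
  rw [Nat.sum_divisors_prime_pow hp, sum_range_succ', sum_congr rfl hterm]
  simp only [sum_const, card_range, nsmul_eq_mul, pow_zero, totient_one, cast_one, div_one]
  ring

theorem sum_totient_div_eq_prod {n : ℕ} (hn : n ≠ 0) :
    ∑ d ∈ n.divisors, (φ d : ℚ) / d =
      ∏ p ∈ n.primeFactors, (1 + n.factorization p * (1 - (p : ℚ)⁻¹)) := by
  have hmul : ∀ a b : ℕ, a.Coprime b → ∑ d ∈ (a * b).divisors, (φ d : ℚ) / d =
      (∑ d ∈ a.divisors, (φ d : ℚ) / d) * ∑ d ∈ b.divisors, (φ d : ℚ) / d := by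
    intro a b hab
    rw [sum_divisors_mul_of_coprime hab, sum_mul_sum]
    refine sum_congr rfl fun d₁ h₁ => sum_congr rfl fun d₂ h₂ => ?_
    rw [Nat.totient_mul ((hab.coprime_dvd_left (Nat.dvd_of_mem_divisors h₁)).coprime_dvd_right
      (Nat.dvd_of_mem_divisors h₂)), Nat.cast_mul, Nat.cast_mul, mul_div_mul_comm]
  rw [Nat.multiplicative_factorization (fun n => ∑ d ∈ n.divisors, (φ d : ℚ) / d) hmul
    (by simp) hn, Nat.prod_factorization_eq_prod_primeFactors]
  exact prod_congr rfl fun p hp => sum_totient_div_prime_pow (Nat.prime_of_mem_primeFactors hp) _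

theorem sum_totient_div_eq_card_divisors_mul_prod {n : ℕ} (hn : n ≠ 0) :
    ∑ d ∈ n.divisors, (φ d : ℚ) / d = #n.divisors *
      ∏ p ∈ n.primeFactors, (1 - (n.factorization p : ℚ) / ((n.factorization p + 1) * p)) := by
  rw [sum_totient_div_eq_prod hn, Nat.card_divisors hn, Nat.cast_prod, ← prod_mul_distrib]
  refine prod_congr rfl fun p hp => ?_
  have hp0 : (p : ℚ) ≠ 0 := Nat.cast_ne_zero.2 (Nat.prime_of_mem_primeFactors hp).ne_zero
  push_cast
  field_simp
  ring

theorem sivaramakrishnan_identity_general (m n t n₁ : ℕ) (hn : 0 < n) (ht : 0 < t)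
    (hmt : m ∣ t) (hnt : n ∣ t)
    (hd : n₁ ∣ n) (hc : Nat.gcd n₁ m = 1)
    (hmax : ∀ d, d ∣ n → Nat.gcd d m = 1 → d ≤ n₁) :
    (∑ a ∈ (Finset.Icc 1 t).filter (fun a => Nat.gcd a m = 1), (Nat.gcd (a - 1) n : ℚ))
      = (t * m.totient * n.divisors.card : ℚ) / m *
        ∏ p ∈ n₁.primeFactors,
          (1 - (n₁.factorization p : ℚ) / ((n₁.factorization p + 1) * p)) := by
  obtain ⟨n₂, rfl⟩ := hd
  have hn₁ : n₁ ≠ 0 := left_ne_zero_of_mul hn.ne'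
  have hn₂ : ∀ p, p.Prime → p ∣ n₂ → p ∣ m := fun p => prime_dvd_of_dvd_cofactor hn₁ hc hmax
  have hn₁₂ : n₁.Coprime n₂ := Nat.Coprime.coprime_of_forall_prime_dvd hc hn₂
  have hterm : ∀ d₁ ∈ n₁.divisors, ∀ d₂ ∈ n₂.divisors,
      (φ (d₁ * d₂) * #{a ∈ Icc 1 t | a.Coprime m ∧ d₁ * d₂ ∣ a - 1} : ℚ) =
        t * φ m / m * (φ d₁ / d₁) := fun d₁ h₁ d₂ h₂ =>
    totient_mul_card_filter_dvd_sub_one_eq ht.ne' hmt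
      ((mul_dvd_mul (Nat.dvd_of_mem_divisors h₁) (Nat.dvd_of_mem_divisors h₂)).trans hnt)
      (Nat.Coprime.coprime_dvd_left (Nat.dvd_of_mem_divisors h₁) hc) fun p hp hpd₂ =>
        hn₂ p hp (hpd₂.trans (Nat.dvd_of_mem_divisors h₂))
  calc (∑ a ∈ (Icc 1 t).filter (fun a => Nat.gcd a m = 1), (Nat.gcd (a - 1) (n₁ * n₂) : ℚ))
      = ∑ d ∈ (n₁ * n₂).divisors, (φ d * #{a ∈ Icc 1 t | a.Coprime m ∧ d ∣ a - 1} : ℚ) := by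
        rw [← Nat.cast_sum, sum_gcd_eq_sum_totient_mul_card _ _ hn.ne']
        simp_rw [filter_filter]
        push_cast
        rfl
    _ = ∑ d₁ ∈ n₁.divisors, ∑ d₂ ∈ n₂.divisors, t * φ m / m * (φ d₁ / d₁ : ℚ) := by
        rw [sum_divisors_mul_of_coprime hn₁₂]
        exact sum_congr rfl fun d₁ h₁ => sum_congr rfl (hterm d₁ h₁)
    _ = t * φ m / m * #n₂.divisors * ∑ d₁ ∈ n₁.divisors, (φ d₁ / d₁ : ℚ) := by
        simp only [sum_const, nsmul_eq_mul, mul_sum]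
        exact sum_congr rfl fun _ _ => by ring
    _ = _ := by
        rw [sum_totient_div_eq_card_divisors_mul_prod hn₁, hn₁₂.card_divisors_mul]
        push_cast
        ring

theorem sivaramakrishnan_identity (m n t n₁ : ℕ) (hm : 0 < m) (hn : 0 < n) (ht : 0 < t)
    (hmt : m ∣ t) (hnt : n ∣ t)
    (hd : n₁ ∣ n) (hc : Nat.gcd n₁ m = 1)
    (hmax : ∀ d, d ∣ n → Nat.gcd d m = 1 → d ≤ n₁) :
    (∑ a ∈ (Finset.Icc 1 t).filter (fun a => Nat.gcd a m = 1), (Nat.gcd (a - 1) n : ℚ))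
      = (t * m.totient * n.divisors.card : ℚ) / m *
        ∏ p ∈ n₁.primeFactors,
          (1 - (n₁.factorization p : ℚ) / ((n₁.factorization p + 1) * p)) :=
  sivaramakrishnan_identity_general m n t n₁ hn ht hmt hnt hd hc hmax
end

section
/- Sivaramakrishnan's identity in divisor-sum form: for positive integers m, r, s with m∣r and s∣r, ∑_{a=1, gcd(a,s)=1}^{r} gcd(a-1,m) = r · ∑_{d∣m} (φ(d)/d) · ∏_{p∣s, p∤d}(1 - 1/p). -/
/-!
Expanding `gcd (a - 1) m = ∑_{d ∣ gcd (a - 1) m} φ d` turns the left side into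
`∑_{d ∣ m} φ d · N(d)`, where `N(d)` counts the `a ∈ (0, r]` coprime to `s` with `d ∣ a - 1`.
Detecting coprimality by `∑_{e ∣ gcd (a, s)} μ e` gives `N(d) = ∑_{e ∣ s} μ e · #{a : e ∣ a, d ∣ a - 1}`,
and by the Chinese remainder theorem the inner count is `r / (d e)` if `gcd (d, e) = 1` and `0`
otherwise. Finally `∑_{e ∣ s, gcd (d, e) = 1} μ e / e = ∏_{p ∣ s, p ∤ d} (1 - 1 / p)`, both sides
being the values at `s` of multiplicative functions that agree on prime powers.
-/

open Finset ArithmeticFunction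
open scoped ArithmeticFunction.Moebius ArithmeticFunction.zeta

theorem Finset.sum_sum_filter_eq_sum_card_nsmul {ι κ M : Type*} [AddCommMonoid M] (s : Finset ι)
    (t : Finset κ) (p : ι → κ → Prop) [∀ a b, Decidable (p a b)] (f : κ → M) :
    ∑ a ∈ s, ∑ b ∈ t with p a b, f b = ∑ b ∈ t, #{a ∈ s | p a b} • f b := by
  rw [sum_comm' (t' := t) (s' := fun b => {a ∈ s | p a b}) (by simp only [mem_filter]; tauto)]
  simp only [sum_const]

namespace ArithmeticFunction

theorem IsMultiplicative.sum_divisors_moebius_mul {R : Type*} [CommRing R]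
    {f : ArithmeticFunction R} (hf : f.IsMultiplicative) {n : ℕ} (hn : n ≠ 0) :
    ∑ d ∈ n.divisors, μ d * f d = ∏ p ∈ n.primeFactors, (1 - f p) := by
  set g : ArithmeticFunction R := ArithmeticFunction.pmul (μ : ArithmeticFunction R) f
  have hg : (g * ζ).IsMultiplicative :=
    (isMultiplicative_moebius.intCast.pmul hf).mul isMultiplicative_zeta.natCast
  have hP := ArithmeticFunction.IsMultiplicative.prodPrimeFactors fun p => 1 - f p
  have h : g * ζ = ArithmeticFunction.prodPrimeFactors fun p => 1 - f p := by
    refine (hg.eq_iff_eq_on_prime_powers _ _ hP).mpr fun p k hp => ?_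
    rcases k with _ | k
    · rw [pow_zero, hg.map_one, hP.map_one]
    rw [coe_mul_zeta_apply, Nat.sum_divisors_prime_pow hp, sum_range_succ', sum_range_succ',
      sum_eq_zero fun i _ => by simp [g, moebius_apply_prime_pow hp (Nat.succ_ne_zero _)],
      prodPrimeFactors_apply (pow_ne_zero _ hp.ne_zero),
      Nat.primeFactors_prime_pow k.succ_ne_zero hp]
    simp [g, hf.map_one, moebius_apply_prime hp, sub_eq_neg_add]
  rw [← prodPrimeFactors_apply hn, ← h, coe_mul_zeta_apply]
  simp [g]

def coprimeInv (K : Type*) [Field K] (d : ℕ) : ArithmeticFunction K :=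
  ⟨fun e => if d.Coprime e then (e : K)⁻¹ else 0, by simp⟩

theorem coprimeInv_apply {K : Type*} [Field K] (d e : ℕ) :
    coprimeInv K d e = if d.Coprime e then (e : K)⁻¹ else 0 := rfl

theorem isMultiplicative_coprimeInv (K : Type*) [Field K] (d : ℕ) :
    (coprimeInv K d).IsMultiplicative := by
  refine ⟨by simp [coprimeInv_apply], fun {a b} _ => ?_⟩
  simp only [coprimeInv_apply, Nat.coprime_mul_iff_right, ite_zero_mul_ite_zero, Nat.cast_mul,
    mul_inv, ite_and]

end ArithmeticFunction

namespace Nat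

lemma divisors_filter_dvd_eq_divisors_gcd {m : ℕ} (hm : m ≠ 0) (n : ℕ) :
    {d ∈ m.divisors | d ∣ n} = (gcd m n).divisors := by
  rw [← divisors_filter_dvd_of_dvd hm (gcd_dvd_left m n)]
  exact filter_congr fun d hd => by rw [dvd_gcd_iff, and_iff_right (dvd_of_mem_divisors hd)]

lemma gcd_eq_sum_totient {m : ℕ} (hm : m ≠ 0) (n : ℕ) :
    gcd n m = ∑ d ∈ m.divisors with d ∣ n, φ d := by
  rw [divisors_filter_dvd_eq_divisors_gcd hm, sum_totient, gcd_comm]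

lemma sum_moebius_divisors_filter_dvd {R : Type*} [Ring R] {s : ℕ} (hs : s ≠ 0) (a : ℕ) :
    ∑ e ∈ s.divisors with e ∣ a, (μ e : R) = if a.Coprime s then 1 else 0 := by
  have h := congr_arg (· (gcd s a)) (coe_moebius_mul_coe_zeta (R := R))
  simp only [coe_mul_zeta_apply, intCoe_apply, one_apply] at h
  rw [divisors_filter_dvd_eq_divisors_gcd hs, h]
  exact if_congr coprime_comm rfl rfl

lemma sum_divisors_filter_coprime_moebius_div {K : Type*} [Field K] (d : ℕ) {s : ℕ}
    (hs : s ≠ 0) :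
    ∑ e ∈ s.divisors with d.Coprime e, (μ e : K) / e
      = ∏ p ∈ s.primeFactors with ¬p ∣ d, (1 - 1 / (p : K)) := by
  calc ∑ e ∈ s.divisors with d.Coprime e, (μ e : K) / e
      = ∑ e ∈ s.divisors, μ e * coprimeInv K d e := by
        rw [sum_filter]
        exact sum_congr rfl fun e _ => by simp [coprimeInv_apply, div_eq_mul_inv]
    _ = ∏ p ∈ s.primeFactors, (1 - coprimeInv K d p) :=
        (isMultiplicative_coprimeInv K d).sum_divisors_moebius_mul hs
    _ = ∏ p ∈ s.primeFactors with ¬p ∣ d, (1 - 1 / (p : K)) := by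
        rw [prod_filter]
        refine prod_congr rfl fun p hp => ?_
        have hcop : d.Coprime p ↔ ¬p ∣ d :=
          coprime_comm.trans (prime_of_mem_primeFactors hp).coprime_iff_not_dvd
        simp only [coprimeInv_apply, hcop]
        split_ifs <;> simp

lemma Ioc_filter_modEq_card_of_dvd {L N : ℕ} (hLN : L ∣ N) (v : ℕ) :
    #{x ∈ Ioc 0 N | x ≡ v [MOD L]} = N / L := by
  rcases L.eq_zero_or_pos with rfl | hL
  · simp [zero_dvd_iff.mp hLN]
  obtain ⟨k, rfl⟩ := hLN
  have hshift : (((L * k : ℕ) : ℚ) - v) / L = k + ((0 : ℕ) - v : ℚ) / L := by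
    push_cast
    field_simp
    ring
  have h := Ioc_filter_modEq_card 0 (L * k) hL v
  rw [hshift, Int.floor_natCast_add, add_sub_cancel_right, max_eq_left (by positivity)] at h
  rw [Nat.mul_div_cancel_left k hL]
  exact_mod_cast h

lemma Ioc_filter_dvd_and_dvd_sub_one_card {d e N : ℕ} (hdN : d ∣ N) (heN : e ∣ N) :
    #{a ∈ Ioc 0 N | e ∣ a ∧ d ∣ a - 1} = if d.Coprime e then N / (d * e) else 0 := by
  split_ifs with hde
  · obtain ⟨c, hc₁, hc₀⟩ := chineseRemainder hde 1 0
    rw [← Ioc_filter_modEq_card_of_dvd (hde.mul_dvd_of_dvd_of_dvd hdN heN) c]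
    congr 1
    refine filter_congr fun a ha => ?_
    rw [← modEq_and_modEq_iff_modEq_mul hde, ← modEq_zero_iff_dvd,
      ← modEq_iff_dvd' (mem_Ioc.mp ha).1]
    exact ⟨fun ⟨h₀, h₁⟩ => ⟨(hc₁.trans h₁).symm, h₀.trans hc₀.symm⟩,
      fun ⟨h₁, h₀⟩ => ⟨h₀.trans hc₀, hc₁.symm.trans h₁.symm⟩⟩
  · rw [Finset.card_eq_zero, filter_eq_empty_iff]
    rintro a ha ⟨hea, hda⟩
    exact hde (Coprime.of_dvd hda hea ((coprime_self_sub_left (mem_Ioc.mp ha).1).mpr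
      (coprime_one_left a)))

lemma card_Ioc_filter_coprime_dvd_sub_one {K : Type*} [Field K] [CharZero K] {d s N : ℕ}
    (hd : d ≠ 0) (hs : s ≠ 0) (hdN : d ∣ N) (hsN : s ∣ N) :
    (#{a ∈ Ioc 0 N | a.Coprime s ∧ d ∣ a - 1} : K)
      = N / d * ∏ p ∈ s.primeFactors with ¬p ∣ d, (1 - 1 / (p : K)) := by
  rw [← sum_divisors_filter_coprime_moebius_div d hs, mul_sum, sum_filter]
  calc (#{a ∈ Ioc 0 N | a.Coprime s ∧ d ∣ a - 1} : K)
      = ∑ a ∈ Ioc 0 N with d ∣ a - 1, ∑ e ∈ s.divisors with e ∣ a, (μ e : K) := by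
        simp_rw [sum_moebius_divisors_filter_dvd hs, sum_boole, filter_filter, and_comm]
    _ = ∑ e ∈ s.divisors, #{a ∈ Ioc 0 N | e ∣ a ∧ d ∣ a - 1} • (μ e : K) := by
        simp_rw [sum_sum_filter_eq_sum_card_nsmul, filter_filter, and_comm]
    _ = _ := sum_congr rfl fun e he => by
        have he₀ : e ≠ 0 := (pos_of_mem_divisors he).ne'
        have heN : e ∣ N := (dvd_of_mem_divisors he).trans hsN
        rw [Ioc_filter_dvd_and_dvd_sub_one_card hdN heN]
        split_ifs with hde
        · rw [nsmul_eq_mul, cast_div (hde.mul_dvd_of_dvd_of_dvd hdN heN) (by positivity)]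
          push_cast
          field_simp
        · simp

end Nat

theorem sivaramakrishnan_divisor_form_general (m r s : ℕ) (hmr : m ∣ r) (hsr : s ∣ r) :
    (∑ a ∈ (Finset.Icc 1 r).filter (fun a => Nat.gcd a s = 1), (Nat.gcd (a - 1) m : ℚ))
      = r * ∑ d ∈ m.divisors,
          ((d.totient : ℚ) / d) *
            ∏ p ∈ s.primeFactors.filter (fun p => ¬ p ∣ d), (1 - 1 / (p : ℚ)) := by
  rcases r.eq_zero_or_pos with rfl | hr
  · simp
  have hm : m ≠ 0 := ne_zero_of_dvd_ne_zero hr.ne' hmr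
  have hs : s ≠ 0 := ne_zero_of_dvd_ne_zero hr.ne' hsr
  calc ∑ a ∈ (Icc 1 r).filter (fun a => Nat.gcd a s = 1), (Nat.gcd (a - 1) m : ℚ)
      = ∑ a ∈ Ioc 0 r with a.Coprime s, ∑ d ∈ m.divisors with d ∣ a - 1, (d.totient : ℚ) := by
        simp_rw [← Icc_add_one_left_eq_Ioc, zero_add, Nat.gcd_eq_sum_totient hm, Nat.cast_sum]
    _ = ∑ d ∈ m.divisors, (d.totient : ℚ) * #{a ∈ Ioc 0 r | a.Coprime s ∧ d ∣ a - 1} := by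
        simp_rw [sum_sum_filter_eq_sum_card_nsmul, filter_filter, nsmul_eq_mul, mul_comm]
    _ = _ := by
        rw [mul_sum]
        refine sum_congr rfl fun d hd => ?_
        rw [Nat.card_Ioc_filter_coprime_dvd_sub_one (Nat.pos_of_mem_divisors hd).ne' hs
          ((Nat.dvd_of_mem_divisors hd).trans hmr) hsr]
        ring

theorem sivaramakrishnan_divisor_form (m r s : ℕ) (hm : 0 < m) (hr : 0 < r) (hs : 0 < s)
    (hmr : m ∣ r) (hsr : s ∣ r) :
    (∑ a ∈ (Finset.Icc 1 r).filter (fun a => Nat.gcd a s = 1), (Nat.gcd (a - 1) m : ℚ))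
      = r * ∑ d ∈ m.divisors,
          ((d.totient : ℚ) / d) *
            ∏ p ∈ s.primeFactors.filter (fun p => ¬ p ∣ d), (1 - 1 / (p : ℚ)) :=
  sivaramakrishnan_divisor_form_general m r s hmr hsr
end

section
/- For positive integers n, k, ℓ and q₁,…,q_k: ∑ over a₁,…,a_k in 1..n with each gcd(a_i,n)=1 and b₁,…,b_ℓ in 1..n of gcd(a₁^{q₁}-1, …, a_k^{q_k}-1, b₁, …, b_ℓ, n) equals φ(n)^k · (id_ℓ ∗ H_k)(n), where H_k(n) = φ(n)^{1-k} · ∏_{i=1}^{k} C^{(q_i)}(n) and C^{(q)}(n) is the number of x mod n with x^q ≡ 1 (mod n). -/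
/-!
Expanding `gcd x n = ∑_{e ∣ n, e ∣ x} φ e` turns the left-hand side into
`∑_{e ∣ n} φ e · #{a : e ∣ aᵢ^{qᵢ} - 1 for all i} · (n / e)^ℓ`, and the count of `a` factors over
`i`. Since `(ℤ/n)ˣ → (ℤ/e)ˣ` is onto, its fibres have `φ n / φ e` elements, and every solution of
`x^q = 1` mod `e` is a unit, so the `i`-th factor is `φ n / φ e · C^{(qᵢ)}(e)`. Substituting
`e = n / d` gives the Dirichlet convolution.
-/

open Finset Function

namespace Nat

lemma gcd_eq_sum_totient_filter_divisors {n : ℕ} (hn : n ≠ 0) (x : ℕ) :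
    Nat.gcd x n = ∑ e ∈ n.divisors with e ∣ x, e.totient := by
  conv_lhs => rw [← Nat.sum_totient (x.gcd n)]
  congr 1
  ext e
  simp only [mem_divisors, mem_filter, Nat.dvd_gcd_iff]
  have := Nat.gcd_ne_zero_right (m := x) hn
  tauto

lemma sum_sum_gcd_gcd_eq_sum_divisors {α β : Type*} (s : Finset α) (t : Finset β)
    (f : α → ℕ) (g : β → ℕ) {n : ℕ} (hn : n ≠ 0) :
    ∑ a ∈ s, ∑ b ∈ t, Nat.gcd (f a) (Nat.gcd (g b) n)
      = ∑ e ∈ n.divisors, e.totient * #{a ∈ s | e ∣ f a} * #{b ∈ t | e ∣ g b} := by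
  simp_rw [← Nat.gcd_assoc, gcd_eq_sum_totient_filter_divisors hn, Nat.dvd_gcd_iff, sum_filter]
  rw [sum_congr rfl fun a _ => sum_comm, sum_comm]
  refine sum_congr rfl fun e _ => ?_
  rw [card_filter, card_filter, mul_assoc, sum_mul_sum, mul_sum]
  refine sum_congr rfl fun a _ => ?_
  rw [mul_sum]
  refine sum_congr rfl fun b _ => ?_
  split_ifs <;> simp_all

lemma card_filter_Icc_one_dvd (n d : ℕ) : #{b ∈ Icc 1 n | d ∣ b} = n / d := by
  rw [← zero_add 1, Icc_add_one_left_eq_Ioc, Nat.Ioc_filter_dvd_card_eq_div]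

end Nat

lemma Fintype.card_filter_piFinset_dvd_gcd {ι α : Type*} [Fintype ι] [DecidableEq ι]
    (s : ι → Finset α) (f : ι → α → ℕ) (e : ℕ) :
    #{a ∈ piFinset s | e ∣ univ.gcd fun i => f i (a i)} = ∏ i, #{x ∈ s i | e ∣ f i x} := by
  rw [← card_piFinset]
  congr 1
  ext a
  simp [Finset.dvd_gcd_iff, mem_piFinset, forall_and]

namespace MonoidHom

variable {G H : Type*} [Group G] [Group H] [Fintype G] [Fintype H] [DecidableEq H]

lemma card_filter_comp_mul_card_of_surjective (f : G →* H) (hf : Surjective f)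
    (p : H → Prop) [DecidablePred p] :
    #{x | p (f x)} * Fintype.card H = Fintype.card G * #{y | p y} := by
  have hfiber (s : Finset H) : #{x | f x ∈ s} = #s * #{x | f x = 1} := by
    rw [card_eq_sum_card_fiberwise (f := f) (t := s) fun x hx => by simpa using hx,
      sum_const_nat fun y hy => ?_]
    rw [filter_filter, filter_congr fun x _ => ⟨And.right, fun h => ⟨h ▸ hy, h⟩⟩]
    exact card_fiber_eq_of_mem_range f (hf y) (hf 1)
  have hG := hfiber univ
  have hp := hfiber {y | p y}
  simp only [mem_univ, filter_true, card_univ, mem_filter, true_and] at hG hp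
  rw [hp, hG]
  ring

end MonoidHom

section Units

variable {M : Type*} [Monoid M] [Fintype M] [Fintype Mˣ]

lemma Finset.card_filter_isUnit_and [DecidablePred (IsUnit : M → Prop)]
    (p : M → Prop) [DecidablePred p] :
    #{x : M | IsUnit x ∧ p x} = #{u : Mˣ | p u} := by
  symm
  apply card_bij (fun (u : Mˣ) _ => (u : M))
  · intro u hu
    simp only [mem_filter, mem_univ, true_and] at hu ⊢
    exact ⟨u.isUnit, hu⟩
  · intro u _ v _ h
    exact Units.ext h
  · intro x hx
    simp only [mem_filter, mem_univ, true_and] at hx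
    exact ⟨hx.1.unit, by simpa using hx.2, rfl⟩

lemma card_filter_pow_eq_one_eq_card_units [DecidableEq M] {m : ℕ} (hm : m ≠ 0) :
    #{x : M | x ^ m = 1} = #{u : Mˣ | (u : M) ^ m = 1} := by
  classical
  rw [← card_filter_isUnit_and fun x : M => x ^ m = 1]
  exact congrArg Finset.card <| filter_congr fun x _ =>
    ⟨fun h => ⟨IsUnit.of_pow_eq_one h hm, h⟩, And.right⟩

end Units

namespace ZMod

lemma natCast_pow_eq_one_iff {d : ℕ} (x m : ℕ) : (x : ZMod d) ^ m = 1 ↔ x ^ m % d = 1 % d := by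
  rw [← Nat.cast_pow, ← Nat.cast_one, natCast_eq_natCast_iff']

lemma natCast_pow_eq_one_iff_dvd {d x : ℕ} (m : ℕ) (hx : x ≠ 0) :
    (x : ZMod d) ^ m = 1 ↔ d ∣ x ^ m - 1 := by
  rw [← natCast_eq_zero_iff, Nat.cast_sub (Nat.one_le_pow _ _ (Nat.pos_of_ne_zero hx)),
    sub_eq_zero, Nat.cast_pow, Nat.cast_one]

variable {n : ℕ} [NeZero n]

lemma card_filter_range_natCast (p : ZMod n → Prop) [DecidablePred p] :
    #((range n).filter fun a : ℕ => p a) = #{x : ZMod n | p x} := by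
  apply card_nbij' (fun a : ℕ => (a : ZMod n)) val
  · intro a ha
    simp_all
  · intro x hx
    simp_all [ZMod.val_lt]
  · intro a ha
    exact val_cast_of_lt (mem_range.1 (mem_filter.1 ha).1)
  · intro x _
    simp

lemma card_filter_Icc_natCast (p : ZMod n → Prop) [DecidablePred p] :
    #((Icc 1 n).filter fun a : ℕ => p a) = #{x : ZMod n | p x} := by
  have hper : Periodic (fun a : ℕ => p a) n := fun a => by simp
  rw [← card_filter_range_natCast, ← Nat.count_eq_card_filter_range,
    ← Nat.filter_Ico_card_eq_of_periodic 1 n _ hper, add_comm]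
  rfl

end ZMod

open ZMod in
/-- The `a` counted on the left are the preimages under the surjection `(ℤ/n)ˣ → (ℤ/d)ˣ` of the
`m`-th roots of unity mod `d`, and every fibre has `φ n / φ d` elements. -/
lemma card_coprime_dvd_pow_sub_one_mul_totient {n d m : ℕ} [NeZero n] (hd : d ∣ n) (hm : m ≠ 0) :
    #{a ∈ Icc 1 n | a.Coprime n ∧ d ∣ a ^ m - 1} * d.totient
      = n.totient * #{x ∈ range d | x ^ m % d = 1 % d} := by
  classical
  have : NeZero d := ⟨ne_zero_of_dvd_ne_zero (NeZero.ne n) hd⟩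
  have hunits : #{a ∈ Icc 1 n | a.Coprime n ∧ d ∣ a ^ m - 1}
      = #{u : (ZMod n)ˣ | (unitsMap hd u : ZMod d) ^ m = 1} := by
    refine .trans ?_ (card_filter_isUnit_and fun x : ZMod n => (cast x : ZMod d) ^ m = 1)
    rw [← card_filter_Icc_natCast]
    refine congrArg Finset.card <| filter_congr fun a ha => ?_
    rw [isUnit_iff_coprime, cast_natCast hd, natCast_pow_eq_one_iff_dvd m (by grind)]
  have hroots : #{x ∈ range d | x ^ m % d = 1 % d} = #{u : (ZMod d)ˣ | (u : ZMod d) ^ m = 1} := by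
    rw [← card_filter_pow_eq_one_eq_card_units hm, ← card_filter_range_natCast]
    exact congrArg Finset.card <| filter_congr fun x _ => (natCast_pow_eq_one_iff x m).symm
  rw [hunits, hroots, ← card_units_eq_totient, ← card_units_eq_totient]
  exact (unitsMap hd).card_filter_comp_mul_card_of_surjective (unitsMap_surjective hd)
    fun v => (v : ZMod d) ^ m = 1

lemma totient_mul_prod_card_coprime_dvd_pow_sub_one {n e k : ℕ} [NeZero n] (he : e ∣ n)
    (q : Fin k → ℕ) (hq : ∀ i, 0 < q i) :
    (e.totient : ℚ) * ∏ i, (#{a ∈ Icc 1 n | a.gcd n = 1 ∧ e ∣ a ^ q i - 1} : ℚ)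
      = (n.totient : ℚ) ^ k *
        ((e.totient : ℚ) ^ ((1 : ℤ) - k) * ∏ i, (#{x ∈ range e | x ^ q i % e = 1 % e} : ℚ)) := by
  have htot : (e.totient : ℚ) ≠ 0 := by
    exact_mod_cast (Nat.totient_pos.2 (Nat.pos_of_dvd_of_pos he (Nat.pos_of_neZero n))).ne'
  have hcount (i : Fin k) :
      (#{a ∈ Icc 1 n | a.gcd n = 1 ∧ e ∣ a ^ q i - 1} : ℚ) * e.totient
        = n.totient * #{x ∈ range e | x ^ q i % e = 1 % e} := by
    exact_mod_cast card_coprime_dvd_pow_sub_one_mul_totient he (hq i).ne'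
  have hprod := prod_congr rfl fun i (_ : i ∈ univ) => hcount i
  rw [← prod_mul_pow_card, ← pow_card_mul_prod, card_univ, Fintype.card_fin] at hprod
  rw [zpow_sub₀ htot, zpow_one, zpow_natCast]
  field_simp
  linear_combination hprod

theorem menon_type_identity_powers_general (n k ℓ : ℕ) (hn : 0 < n)
    (q : Fin k → ℕ) (hq : ∀ i, 0 < q i) :
    (∑ a ∈ Fintype.piFinset
        (fun _ : Fin k => (Finset.Icc 1 n).filter (fun a => Nat.gcd a n = 1)),
      ∑ b ∈ Fintype.piFinset (fun _ : Fin ℓ => Finset.Icc 1 n),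
        (Nat.gcd (Finset.univ.gcd (fun i => (a i) ^ (q i) - 1))
          (Nat.gcd (Finset.univ.gcd b) n) : ℚ))
      = (n.totient : ℚ) ^ k *
        ∑ d ∈ n.divisors, (d : ℚ) ^ ℓ *
          (((n / d : ℕ).totient : ℚ) ^ ((1 : ℤ) - (k : ℤ)) *
            ∏ i : Fin k,
              (((Finset.range (n / d)).filter
                (fun x => x ^ (q i) % (n / d) = 1 % (n / d))).card : ℚ)) := by
  have : NeZero n := ⟨hn.ne'⟩
  have hgcd := Nat.sum_sum_gcd_gcd_eq_sum_divisors
    (Fintype.piFinset fun _ : Fin k => (Icc 1 n).filter (fun a => Nat.gcd a n = 1))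
    (Fintype.piFinset fun _ : Fin ℓ => Icc 1 n) (fun a => univ.gcd fun i => a i ^ q i - 1)
    (fun b => univ.gcd b) hn.ne'
  simp only [Fintype.card_filter_piFinset_dvd_gcd _ (fun i x => x ^ q i - 1),
    Fintype.card_filter_piFinset_dvd_gcd _ (fun _ x => x), Nat.card_filter_Icc_one_dvd,
    prod_const, card_univ, Fintype.card_fin, filter_filter] at hgcd
  simp only [← Nat.cast_sum, hgcd]
  rw [← Nat.sum_div_divisors, mul_sum]
  push_cast
  refine sum_congr rfl fun d hd => ?_
  have hdn : d ∣ n := Nat.dvd_of_mem_divisors hd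
  rw [Nat.div_div_self hdn hn.ne',
    totient_mul_prod_card_coprime_dvd_pow_sub_one (Nat.div_dvd_of_dvd hdn) q hq]
  ring

theorem menon_type_identity_powers (n k ℓ : ℕ) (hn : 0 < n) (hk : 0 < k)
    (q : Fin k → ℕ) (hq : ∀ i, 0 < q i) :
    (∑ a ∈ Fintype.piFinset
        (fun _ : Fin k => (Finset.Icc 1 n).filter (fun a => Nat.gcd a n = 1)),
      ∑ b ∈ Fintype.piFinset (fun _ : Fin ℓ => Finset.Icc 1 n),
        (Nat.gcd (Finset.univ.gcd (fun i => (a i) ^ (q i) - 1))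
          (Nat.gcd (Finset.univ.gcd b) n) : ℚ))
      = (n.totient : ℚ) ^ k *
        ∑ d ∈ n.divisors, (d : ℚ) ^ ℓ *
          (((n / d : ℕ).totient : ℚ) ^ ((1 : ℤ) - (k : ℤ)) *
            ∏ i : Fin k,
              (((Finset.range (n / d)).filter
                (fun x => x ^ (q i) % (n / d) = 1 % (n / d))).card : ℚ)) :=
  menon_type_identity_powers_general n k ℓ hn q hq
end

section
/- For every positive integer n: ∑ over a, b from 1 to n with gcd(a,n)=gcd(b,n)=1 of lcm(gcd(a-1,n), gcd(b-1,n)) = φ(n)² · ∏_{p^ν ∥ n} (1 + 2ν − (p^ν − 1)/(p^{ν−1}(p−1)²)). -/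
/-!
Write `lcm x y = ∑_{d ∣ x, e ∣ y} F(d, e)`, where `F` is multiplicative in the pair `(d, e)` and
its local factor at `p` is the two-variable Möbius inversion of `(i, j) ↦ p ^ max i j`. Exchanging
the sums, each `d ∣ n` is met by `φ(n) / φ(d)` reduced residues `a ≡ 1 (mod d)` (the kernel of
`(ℤ/n)ˣ → (ℤ/d)ˣ`), so the sum is `φ(n)² ∑_{d, e ∣ n} F(d, e) / (φ(d) φ(e))`. This is again a
product over `p ∣ n` of finite double sums, and each evaluates to the stated local factor.
-/

open Finset Nat

theorem Nat.Coprime.sum_divisors_mul_eq_sum_sum {M : Type*} [AddCommMonoid M] {m n : ℕ}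
    (hmn : m.Coprime n) (f : ℕ → M) :
    ∑ d ∈ (m * n).divisors, f d = ∑ a ∈ m.divisors, ∑ b ∈ n.divisors, f (a * b) := by
  rw [hmn.divisors_mul, sum_map, ← sum_product']
  exact sum_attach _ (fun x : ℕ × ℕ => f (x.1 * x.2))

theorem Nat.Prime.factorization_pow_mul_apply {q y : ℕ} (hq : q.Prime) (hy : ¬q ∣ y) (k p : ℕ) :
    (q ^ k * y).factorization p = if p = q then k else y.factorization p := by
  have hy0 : y ≠ 0 := by rintro rfl; exact hy (dvd_zero q)
  rw [Nat.factorization_mul (pow_ne_zero _ hq.ne_zero) hy0, hq.factorization_pow]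
  split_ifs with hpq
  · simp [hpq, Nat.factorization_eq_zero_of_not_dvd hy]
  · simp [Ne.symm hpq]

theorem Nat.sum_divisors_prod_factorization {R : Type*} [CommSemiring R] (h : ℕ → ℕ → R)
    {S : Finset ℕ} {x : ℕ} (hx : x ≠ 0) (hS : x.primeFactors ⊆ S) :
    ∑ d ∈ x.divisors, ∏ p ∈ S, h p (d.factorization p) =
      ∏ p ∈ S, ∑ i ∈ range (x.factorization p + 1), h p i := by
  classical
  induction S using Finset.induction_on generalizing x with
  | empty =>
    obtain rfl : x = 1 := (Nat.primeFactors_eq_empty.mp (subset_empty.mp hS)).resolve_left hx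
    simp
  | insert q S hqS ih =>
    by_cases hq : q.Prime
    · obtain ⟨k, y, hqy, rfl⟩ := Nat.exists_eq_pow_mul_and_not_dvd hx q hq.ne_one
      have hy : y ≠ 0 := by rintro rfl; exact hqy (dvd_zero q)
      have hyS : y.primeFactors ⊆ S := fun p hp =>
        (mem_insert.mp (hS (Nat.primeFactors_mono (dvd_mul_left y _) hx hp))).resolve_left
          fun hpq => hqy (hpq ▸ Nat.dvd_of_mem_primeFactors hp)
      rw [(Nat.Coprime.pow_left k (hq.coprime_iff_not_dvd.mpr hqy)).sum_divisors_mul_eq_sum_sum,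
        Nat.sum_divisors_prime_pow hq]
      have hfac : ∀ {e}, ¬q ∣ e → ∀ i, ∀ p ∈ S, (q ^ i * e).factorization p = e.factorization p :=
        fun he i p hp => by
          rw [hq.factorization_pow_mul_apply he, if_neg (ne_of_mem_of_not_mem hp hqS)]
      calc ∑ i ∈ range (k + 1), ∑ e ∈ y.divisors,
            ∏ p ∈ insert q S, h p ((q ^ i * e).factorization p)
          = ∑ i ∈ range (k + 1), ∑ e ∈ y.divisors, h q i * ∏ p ∈ S, h p (e.factorization p) := by
            refine sum_congr rfl fun i _ => sum_congr rfl fun e he => ?_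
            have hqe : ¬q ∣ e := fun h => hqy (h.trans (Nat.dvd_of_mem_divisors he))
            rw [prod_insert hqS, hq.factorization_pow_mul_apply hqe, if_pos rfl,
              prod_congr rfl fun p hp => congrArg (h p) (hfac hqe i p hp)]
        _ = _ := by
          rw [← sum_mul_sum, ih hy hyS, prod_insert hqS, hq.factorization_pow_mul_apply hqy,
            if_pos rfl]
          exact congrArg _ (prod_congr rfl fun p hp => by rw [hfac hqy k p hp])
    · have hxS : x.primeFactors ⊆ S := fun p hp =>
        (mem_insert.mp (hS hp)).resolve_left
          fun hpq => hq (hpq ▸ Nat.prime_of_mem_primeFactors hp)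
      simp only [prod_insert hqS, Nat.factorization_eq_zero_of_not_prime _ hq, ← mul_sum,
        ih hx hxS]
      simp

theorem Nat.sum_divisors_sum_divisors_prod_factorization {R : Type*} [CommSemiring R]
    (g : ℕ → ℕ → ℕ → R) {S : Finset ℕ} {x y : ℕ} (hx : x ≠ 0) (hy : y ≠ 0)
    (hxS : x.primeFactors ⊆ S) (hyS : y.primeFactors ⊆ S) :
    ∑ d ∈ x.divisors, ∑ e ∈ y.divisors, ∏ p ∈ S, g p (d.factorization p) (e.factorization p) =
      ∏ p ∈ S, ∑ i ∈ range (x.factorization p + 1), ∑ j ∈ range (y.factorization p + 1),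
        g p i j := by
  rw [← Nat.sum_divisors_prod_factorization _ hx hxS]
  exact sum_congr rfl fun d _ => Nat.sum_divisors_prod_factorization _ hy hyS

theorem Nat.prod_pow_factorization_of_primeFactors_subset {n : ℕ} {S : Finset ℕ} (hn : n ≠ 0)
    (hS : n.primeFactors ⊆ S) : ∏ p ∈ S, p ^ n.factorization p = n :=
  (Finsupp.prod_of_support_subset _ (by rwa [Nat.support_factorization]) _
    fun _ _ => pow_zero _).symm.trans (Nat.prod_factorization_pow_eq_self hn)

theorem Nat.totient_eq_prod_totient_pow_factorization {n : ℕ} {S : Finset ℕ} (hn : n ≠ 0)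
    (hS : n.primeFactors ⊆ S) : φ n = ∏ p ∈ S, φ (p ^ n.factorization p) :=
  (Nat.multiplicative_factorization φ (fun _ _ => Nat.totient_mul) Nat.totient_one hn).trans
    (Finsupp.prod_of_support_subset _ (by rwa [Nat.support_factorization]) _ (by simp))

theorem Nat.Prime.sum_range_totient_pow {p : ℕ} (hp : p.Prime) (k : ℕ) :
    ∑ i ∈ range (k + 1), φ (p ^ i) = p ^ k := by
  rw [← Nat.sum_divisors_prime_pow hp, Nat.sum_totient]

/-- Chosen so that `∑_{i ≤ I, j ≤ J} lcmMobius p i j = p ^ max I J` for prime `p`. -/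
noncomputable def lcmMobius (p i j : ℕ) : ℚ :=
  (if j = 0 then (φ (p ^ i) : ℚ) else 0) + (if i = 0 then (φ (p ^ j) : ℚ) else 0) -
    (if i = j then (φ (p ^ i) : ℚ) else 0)

theorem Nat.Prime.sum_range_sum_range_lcmMobius {p : ℕ} (hp : p.Prime) (I J : ℕ) :
    ∑ i ∈ range (I + 1), ∑ j ∈ range (J + 1), lcmMobius p i j = (p : ℚ) ^ max I J := by
  have hsum : ∀ k, ∑ i ∈ range (k + 1), (φ (p ^ i) : ℚ) = (p : ℚ) ^ k := fun k => by
    exact_mod_cast hp.sum_range_totient_pow k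
  simp only [lcmMobius, sum_add_distrib, sum_sub_distrib]
  rw [sum_comm (s := range (I + 1))]
  simp only [sum_ite_irrel, sum_const_zero, sum_ite_eq', sum_ite_eq, sum_ite_mem]
  simp only [range_inter_range, mem_range, Nat.zero_lt_succ, if_true, Nat.add_min_add_right, hsum]
  rcases le_total I J with h | h <;> simp [h]

theorem Nat.cast_lcm_eq_sum_divisors_sum_divisors {x y : ℕ} {S : Finset ℕ} (hx : x ≠ 0)
    (hy : y ≠ 0) (hxS : x.primeFactors ⊆ S) (hyS : y.primeFactors ⊆ S) (hS : ∀ p ∈ S, p.Prime) :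
    (x.lcm y : ℚ) = ∑ d ∈ x.divisors, ∑ e ∈ y.divisors,
      ∏ p ∈ S, lcmMobius p (d.factorization p) (e.factorization p) := by
  have hlcmS : (x.lcm y).primeFactors ⊆ S := by
    refine (Nat.primeFactors_mono (Nat.lcm_dvd_mul x y) (mul_ne_zero hx hy)).trans ?_
    rw [Nat.primeFactors_mul hx hy]
    exact union_subset hxS hyS
  rw [Nat.sum_divisors_sum_divisors_prod_factorization _ hx hy hxS hyS,
    prod_congr rfl fun p hp => (hS p hp).sum_range_sum_range_lcmMobius _ _,
    ← Nat.prod_pow_factorization_of_primeFactors_subset (Nat.lcm_ne_zero hx hy) hlcmS]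
  push_cast
  simp only [Nat.factorization_lcm hx hy, Finsupp.sup_apply]

/-- Chosen so that `∑_{i ≤ I, j ≤ J} lcmMobius p i j = p ^ max I J` for prime `p`. -/
noncomputable def lcmMobiusDivTotient (p i j : ℕ) : ℚ :=
  lcmMobius p i j / (φ (p ^ i) * φ (p ^ j))

theorem lcmMobiusDivTotient_eq {p : ℕ} (hp : p ≠ 0) (i j : ℕ) :
    lcmMobiusDivTotient p i j =
      (if j = 0 then 1 else 0) + (if i = 0 then 1 else 0) -
        (if i = j then (φ (p ^ i) : ℚ)⁻¹ else 0) := by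
  have hφ : ∀ k, (φ (p ^ k) : ℚ) ≠ 0 := fun k => by
    exact_mod_cast (Nat.totient_pos.mpr (pow_pos (Nat.pos_of_ne_zero hp) k)).ne'
  unfold lcmMobiusDivTotient lcmMobius
  split_ifs <;> subst_vars <;> field_simp <;> simp

theorem Nat.Prime.sum_range_inv_totient_pow {p : ℕ} (hp : p.Prime) (ν : ℕ) :
    ∑ i ∈ range (ν + 1), (φ (p ^ i) : ℚ)⁻¹ =
      1 + ((p : ℚ) ^ ν - 1) / ((p : ℚ) ^ (ν - 1) * ((p : ℚ) - 1) ^ 2) := by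
  have hp1 : (p : ℚ) - 1 ≠ 0 := sub_ne_zero.mpr (by exact_mod_cast hp.ne_one)
  have hp0 : (p : ℚ) ≠ 0 := by exact_mod_cast hp.ne_zero
  induction ν with
  | zero => simp
  | succ ν ih =>
    rw [sum_range_succ, ih, Nat.totient_prime_pow_succ hp, Nat.cast_mul, Nat.cast_pow,
      Nat.cast_sub hp.one_le, Nat.cast_one]
    cases ν with
    | zero => field_simp; ring
    | succ m => simp only [Nat.add_sub_cancel]; field_simp; ring

theorem Nat.Prime.sum_range_sum_range_lcmMobiusDivTotient {p : ℕ} (hp : p.Prime) (ν : ℕ) :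
    ∑ i ∈ range (ν + 1), ∑ j ∈ range (ν + 1), lcmMobiusDivTotient p i j =
      1 + 2 * (ν : ℚ) - ((p : ℚ) ^ ν - 1) / ((p : ℚ) ^ (ν - 1) * ((p : ℚ) - 1) ^ 2) := by
  simp only [lcmMobiusDivTotient_eq hp.ne_zero, sum_add_distrib, sum_sub_distrib, sum_ite_irrel,
    sum_const_zero, sum_ite_eq', sum_ite_eq, sum_ite_mem, inter_self, hp.sum_range_inv_totient_pow]
  simp only [mem_range, Nat.zero_lt_succ, if_true, sum_const, card_range, nsmul_eq_mul]
  push_cast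
  ring

theorem prod_lcmMobius_div_totient {d e : ℕ} {S : Finset ℕ} (hd : d ≠ 0) (he : e ≠ 0)
    (hdS : d.primeFactors ⊆ S) (heS : e.primeFactors ⊆ S) :
    (∏ p ∈ S, lcmMobius p (d.factorization p) (e.factorization p)) / (φ d * φ e) =
      ∏ p ∈ S, lcmMobiusDivTotient p (d.factorization p) (e.factorization p) := by
  rw [Nat.totient_eq_prod_totient_pow_factorization hd hdS,
    Nat.totient_eq_prod_totient_pow_factorization he heS]
  push_cast
  rw [← prod_mul_distrib, ← prod_div_distrib]
  rfl

theorem ZMod.card_ker_unitsMap_mul_totient {m n : ℕ} [NeZero n] (h : m ∣ n) :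
    Nat.card (ZMod.unitsMap h).ker * φ m = φ n := by
  have : NeZero m := ⟨by rintro rfl; exact NeZero.ne n (Nat.eq_zero_of_zero_dvd h)⟩
  rw [← ZMod.card_units_eq_totient, ← ZMod.card_units_eq_totient, ← Nat.card_eq_fintype_card,
    ← Nat.card_eq_fintype_card, ← (ZMod.unitsMap h).ker.card_mul_index, Subgroup.index_ker,
    MonoidHom.range_eq_top.mpr (ZMod.unitsMap_surjective h), Subgroup.card_top]

theorem ZMod.unitsMap_eq_one_iff_dvd_val_sub_one {m n : ℕ} [NeZero n] (h : m ∣ n)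
    (u : (ZMod n)ˣ) :
    ZMod.unitsMap h u = 1 ↔ m ∣ ((u : ZMod n) - 1).val := by
  rw [← ZMod.natCast_eq_zero_iff, ZMod.natCast_val, Units.ext_iff, ZMod.unitsMap_val,
    Units.val_one, ← sub_eq_zero, ZMod.cast_sub h, ZMod.cast_one h]

theorem ZMod.val_natCast_sub_one {n a : ℕ} (ha : 1 ≤ a) (han : a ≤ n) :
    ((a : ZMod n) - 1).val = a - 1 := by
  rw [← Nat.cast_one, ← Nat.cast_sub ha, ZMod.val_natCast_of_lt (by omega)]

theorem card_filter_coprime_dvd_sub_one_mul_totient {n d : ℕ} [NeZero n] (hd : d ∣ n) :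
    #{a ∈ Icc 1 n | a.gcd n = 1 ∧ d ∣ a - 1} * φ d = φ n := by
  rw [← ZMod.card_ker_unitsMap_mul_totient hd]
  congr 1
  rw [Nat.card_congr (Equiv.subtypeEquivRight fun u => MonoidHom.mem_ker),
    Nat.card_eq_fintype_card, Fintype.card_subtype]
  -- `u ↦ (u - 1).val + 1` rather than `u ↦ u.val`, so that the residue `0` goes to `n ∈ Icc 1 n`.
  refine card_bij' (fun a ha => ZMod.unitOfCoprime a (mem_filter.mp ha).2.1)
    (fun u _ => ((u : ZMod n) - 1).val + 1) ?_ ?_ ?_ ?_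
  · intro a ha
    obtain ⟨ha, -, hda⟩ := mem_filter.mp ha
    obtain ⟨ha1, han⟩ := mem_Icc.mp ha
    simpa [ZMod.unitsMap_eq_one_iff_dvd_val_sub_one, ZMod.val_natCast_sub_one ha1 han] using hda
  · intro u hu
    have hcast : ((((u : ZMod n) - 1).val + 1 : ℕ) : ZMod n) = u := by simp
    simp only [mem_filter, mem_Icc, Nat.add_sub_cancel]
    refine ⟨⟨by omega, ZMod.val_lt _⟩,
      (ZMod.isUnit_iff_coprime _ n).mp (by rw [hcast]; exact u.isUnit),
      (ZMod.unitsMap_eq_one_iff_dvd_val_sub_one hd u).mp (mem_filter.mp hu).2⟩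
  · intro a ha
    obtain ⟨ha1, han⟩ := mem_Icc.mp (mem_filter.mp ha).1
    simp only [ZMod.coe_unitOfCoprime, ZMod.val_natCast_sub_one ha1 han]
    omega
  · intro u _
    ext
    simp

theorem sum_coprime_sum_divisors_gcd_sub_one {K : Type*} [Field K] [CharZero K] {n : ℕ}
    (hn : n ≠ 0) (f : ℕ → K) :
    ∑ a ∈ Icc 1 n with a.gcd n = 1, ∑ d ∈ ((a - 1).gcd n).divisors, f d =
      φ n * ∑ d ∈ n.divisors, f d / φ d := by
  have : NeZero n := ⟨hn⟩
  calc ∑ a ∈ Icc 1 n with a.gcd n = 1, ∑ d ∈ ((a - 1).gcd n).divisors, f d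
      = ∑ a ∈ Icc 1 n with a.gcd n = 1, ∑ d ∈ n.divisors with d ∣ a - 1, f d := by
        refine sum_congr rfl fun a _ => ?_
        rw [← Nat.divisors_filter_dvd_of_dvd hn (Nat.gcd_dvd_right _ _)]
        refine sum_congr (filter_congr fun d hd => ?_) fun _ _ => rfl
        rw [Nat.dvd_gcd_iff, and_iff_left (Nat.dvd_of_mem_divisors hd)]
    _ = ∑ d ∈ n.divisors, ∑ a ∈ Icc 1 n with a.gcd n = 1 ∧ d ∣ a - 1, f d :=
        sum_comm' fun a d => by simp only [mem_filter]; tauto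
    _ = φ n * ∑ d ∈ n.divisors, f d / φ d := by
        rw [mul_sum]
        refine sum_congr rfl fun d hd => ?_
        have hφ : (φ d : K) ≠ 0 := by
          exact_mod_cast (Nat.totient_pos.mpr (Nat.pos_of_mem_divisors hd)).ne'
        rw [sum_const, nsmul_eq_mul, ← card_filter_coprime_dvd_sub_one_mul_totient
          (Nat.dvd_of_mem_divisors hd)]
        field_simp
        push_cast
        ring

theorem sum_coprime_sum_coprime_sum_divisors_gcd_sub_one {K : Type*} [Field K] [CharZero K]
    {n : ℕ} (hn : n ≠ 0) (W : ℕ → ℕ → K) :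
    ∑ a ∈ Icc 1 n with a.gcd n = 1, ∑ b ∈ Icc 1 n with b.gcd n = 1,
        ∑ d ∈ ((a - 1).gcd n).divisors, ∑ e ∈ ((b - 1).gcd n).divisors, W d e =
      φ n ^ 2 * ∑ d ∈ n.divisors, ∑ e ∈ n.divisors, W d e / (φ d * φ e) := by
  simp_rw [sum_comm (s := {b ∈ Icc 1 n | b.gcd n = 1}), sum_coprime_sum_divisors_gcd_sub_one hn,
    mul_sum, sum_div, mul_sum]
  refine sum_congr rfl fun d _ => sum_congr rfl fun e _ => ?_
  ring

theorem menon_lcm_two (n : ℕ) (hn : 0 < n) :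
    (∑ a ∈ (Finset.Icc 1 n).filter (fun a => Nat.gcd a n = 1),
      ∑ b ∈ (Finset.Icc 1 n).filter (fun b => Nat.gcd b n = 1),
        (Nat.lcm (Nat.gcd (a - 1) n) (Nat.gcd (b - 1) n) : ℚ))
      = (n.totient : ℚ) ^ 2 *
        ∏ p ∈ n.primeFactors,
          (1 + 2 * (n.factorization p : ℚ)
            - ((p : ℚ) ^ (n.factorization p) - 1) /
              ((p : ℚ) ^ (n.factorization p - 1) * ((p : ℚ) - 1) ^ 2)) := by
  have hn0 : n ≠ 0 := hn.ne'
  have hprime : ∀ p ∈ n.primeFactors, p.Prime := fun p hp => Nat.prime_of_mem_primeFactors hp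
  have hdiv : ∀ {d}, d ∣ n → d ≠ 0 ∧ d.primeFactors ⊆ n.primeFactors := fun h =>
    ⟨ne_zero_of_dvd_ne_zero hn0 h, Nat.primeFactors_mono h hn0⟩
  have hgcd : ∀ a, (a - 1).gcd n ∣ n := fun a => Nat.gcd_dvd_right _ _
  calc _ = ∑ a ∈ Icc 1 n with a.gcd n = 1, ∑ b ∈ Icc 1 n with b.gcd n = 1,
          ∑ d ∈ ((a - 1).gcd n).divisors, ∑ e ∈ ((b - 1).gcd n).divisors,
            ∏ p ∈ n.primeFactors, lcmMobius p (d.factorization p) (e.factorization p) :=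
        sum_congr rfl fun a _ => sum_congr rfl fun b _ =>
          Nat.cast_lcm_eq_sum_divisors_sum_divisors (hdiv (hgcd a)).1 (hdiv (hgcd b)).1
            (hdiv (hgcd a)).2 (hdiv (hgcd b)).2 hprime
    _ = φ n ^ 2 * ∑ d ∈ n.divisors, ∑ e ∈ n.divisors,
          ∏ p ∈ n.primeFactors, lcmMobiusDivTotient p (d.factorization p) (e.factorization p) := by
        rw [sum_coprime_sum_coprime_sum_divisors_gcd_sub_one hn0]
        refine congrArg _ (sum_congr rfl fun d hd => sum_congr rfl fun e he => ?_)
        have hd' := hdiv (Nat.dvd_of_mem_divisors hd)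
        have he' := hdiv (Nat.dvd_of_mem_divisors he)
        exact prod_lcmMobius_div_totient hd'.1 he'.1 hd'.2 he'.2
    _ = _ := by
        rw [Nat.sum_divisors_sum_divisors_prod_factorization _ hn0 hn0 subset_rfl subset_rfl]
        exact congrArg _ (prod_congr rfl fun p hp =>
          (hprime p hp).sum_range_sum_range_lcmMobiusDivTotient _)
end

section
/- Convolution formula for Menon's sum: for any arithmetic function f of r variables and polynomials P₁,…,P_r ∈ ℤ[x], ∑_{a=1}^{n} f(gcd(P₁(a),n),…,gcd(P_r(a),n)) = n · ∑_{d₁∣n,…,d_r∣n} ((μ_r ∗_r f)(d₁,…,d_r)/lcm(d₁,…,d_r)) · N(d₁,…,d_r), where N(d₁,…,d_r) is the number of x mod lcm(d₁,…,d_r) with P_i(x) ≡ 0 (mod d_i) for all i. -/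
/-!
Möbius inversion in `r` variables writes `f (gcd (P₁ a, n), …, gcd (P_r a, n))` as the sum of
`(μ_r ∗_r f) d` over the tuples `d` of divisors of `n` with `dᵢ ∣ Pᵢ a` for all `i`. After
exchanging the two sums, `(μ_r ∗_r f) d` is weighted by the number of `a ∈ [1, n]` satisfying
these divisibilities. Since `Pᵢ (a + L) ≡ Pᵢ a (mod dᵢ)` whenever `dᵢ ∣ L`, this condition is
periodic in `a` with period `lcm d`, which divides `n`; so the count is `n / lcm d · N d`.
-/

open Finset ArithmeticFunction
open scoped ArithmeticFunction.Moebius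

namespace Nat

theorem div_mem_divisors {g d e : ℕ} (hd : d ∈ g.divisors) (he : e ∣ d) : d / e ∈ g.divisors :=
  mem_divisors.2 ⟨(div_dvd_of_dvd he).trans (dvd_of_mem_divisors hd), ne_zero_of_mem_divisors hd⟩

theorem mem_divisors_div_div {g d e : ℕ} (hd : d ∈ g.divisors) (he : e ∈ d.divisors) :
    e ∈ (g / (d / e)).divisors := by
  have hde := div_mem_divisors hd (dvd_of_mem_divisors he)
  refine mem_divisors.2 ⟨?_, (div_ne_zero_iff_of_dvd (dvd_of_mem_divisors hde)).2
    ⟨ne_zero_of_mem_divisors hd, (pos_of_mem_divisors hde).ne'⟩⟩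
  rw [dvd_div_iff_mul_dvd (dvd_of_mem_divisors hde), Nat.div_mul_cancel (dvd_of_mem_divisors he)]
  exact dvd_of_mem_divisors hd

theorem mul_mem_divisors_of_mem_divisors_div {g c e : ℕ} (hc : c ∈ g.divisors)
    (he : e ∈ (g / c).divisors) : c * e ∈ g.divisors :=
  mem_divisors.2 ⟨(dvd_div_iff_mul_dvd (dvd_of_mem_divisors hc)).1 (dvd_of_mem_divisors he),
    ne_zero_of_mem_divisors hc⟩

theorem mem_divisors_intGcd_iff {n : ℕ} (hn : n ≠ 0) (x : ℤ) {d : ℕ} :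
    d ∈ (Int.gcd x n).divisors ↔ d ∈ n.divisors ∧ (d : ℤ) ∣ x := by
  rw [mem_divisors, mem_divisors, Int.gcd, Nat.dvd_gcd_iff, Int.natAbs_natCast, Int.natCast_dvd]
  simp only [ne_eq, Nat.gcd_ne_zero_right hn, hn, not_false_eq_true, true_and, and_comm]

end Nat

section MoebiusInversion

variable {ι : Type*} [Fintype ι] [DecidableEq ι]

/-- `piMoebiusConv f` is the `r`-variable convolution `μ_r ∗_r f`. -/
def piMoebiusConv {R : Type*} [CommRing R] (f : (ι → ℕ) → R) (d : ι → ℕ) : R :=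
  ∑ e ∈ Fintype.piFinset (fun i => (d i).divisors), (∏ i, (μ (e i) : R)) * f (fun i => d i / e i)

theorem sum_divisors_moebius_eq_ite {R : Type*} [Ring R] (m : ℕ) :
    ∑ e ∈ m.divisors, (μ e : R) = if m = 1 then 1 else 0 := by
  simpa only [coe_mul_zeta_apply, intCoe_apply, one_apply] using
    congrArg (fun g : ArithmeticFunction R => g m) coe_moebius_mul_coe_zeta

theorem sum_piFinset_divisors_prod_moebius {R : Type*} [CommRing R] (m : ι → ℕ) :
    ∑ e ∈ Fintype.piFinset (fun i => (m i).divisors), ∏ i, (μ (e i) : R) =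
      if m = 1 then 1 else 0 := by
  rw [← prod_univ_sum (fun i => (m i).divisors) fun _ e => (μ e : R)]
  simp only [sum_divisors_moebius_eq_ite, Fintype.prod_boole, funext_iff, Pi.one_apply]

theorem sum_piFinset_divisors_sigma_div {M : Type*} [AddCommMonoid M] (g : ι → ℕ)
    (F : (ι → ℕ) → (ι → ℕ) → M) :
    ∑ d ∈ Fintype.piFinset (fun i => (g i).divisors),
        ∑ e ∈ Fintype.piFinset (fun i => (d i).divisors), F (fun i => d i / e i) e =
      ∑ c ∈ Fintype.piFinset (fun i => (g i).divisors),
        ∑ e ∈ Fintype.piFinset (fun i => (g i / c i).divisors), F c e := by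
  simp only [sum_sigma']
  refine sum_nbij' (fun p => ⟨fun i => p.1 i / p.2 i, p.2⟩)
    (fun q => ⟨fun i => q.1 i * q.2 i, q.2⟩) ?_ ?_ ?_ ?_ fun _ _ => rfl
  all_goals
    rintro ⟨a, b⟩ h
    simp only [mem_sigma, Fintype.mem_piFinset] at h
  · simp only [mem_sigma, Fintype.mem_piFinset]
    exact ⟨fun i => Nat.div_mem_divisors (h.1 i) (Nat.dvd_of_mem_divisors (h.2 i)),
      fun i => Nat.mem_divisors_div_div (h.1 i) (h.2 i)⟩
  · simp only [mem_sigma, Fintype.mem_piFinset]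
    have hab i := Nat.mul_mem_divisors_of_mem_divisors_div (h.1 i) (h.2 i)
    exact ⟨hab, fun i =>
      Nat.mem_divisors.2 ⟨dvd_mul_left _ _, (Nat.pos_of_mem_divisors (hab i)).ne'⟩⟩
  · ext i
    · exact Nat.div_mul_cancel (Nat.dvd_of_mem_divisors (h.2 i))
    · rfl
  · ext i
    · exact Nat.mul_div_cancel _ (Nat.pos_of_mem_divisors (h.2 i))
    · rfl

theorem sum_piFinset_divisors_piMoebiusConv {R : Type*} [CommRing R] (f : (ι → ℕ) → R)
    {g : ι → ℕ} (hg : ∀ i, g i ≠ 0) :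
    ∑ d ∈ Fintype.piFinset (fun i => (g i).divisors), piMoebiusConv f d = f g := by
  have hdiv_eq_one {c : ι → ℕ} (hc : c ∈ Fintype.piFinset fun i => (g i).divisors) :
      (fun i => g i / c i) = 1 ↔ c = g := by
    simp only [funext_iff, Pi.one_apply]
    refine forall_congr' fun i => ?_
    have hci := Fintype.mem_piFinset.1 hc i
    rw [Nat.div_eq_iff_eq_mul_left (Nat.pos_of_mem_divisors hci) (Nat.dvd_of_mem_divisors hci),
      one_mul, eq_comm]
  calc ∑ d ∈ Fintype.piFinset (fun i => (g i).divisors), piMoebiusConv f d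
      = ∑ c ∈ Fintype.piFinset (fun i => (g i).divisors),
          ∑ e ∈ Fintype.piFinset (fun i => (g i / c i).divisors), (∏ i, (μ (e i) : R)) * f c :=
        sum_piFinset_divisors_sigma_div g fun c e => (∏ i, (μ (e i) : R)) * f c
    _ = ∑ c ∈ Fintype.piFinset (fun i => (g i).divisors), if c = g then f c else 0 := by
        refine sum_congr rfl fun c hc => ?_
        simp only [← sum_mul, sum_piFinset_divisors_prod_moebius, hdiv_eq_one hc, ite_mul, one_mul,
          zero_mul]
    _ = f g := by
        rw [sum_ite_eq', if_pos (Fintype.mem_piFinset.2 fun i => Nat.mem_divisors_self _ (hg i))]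

theorem apply_intGcd_eq_sum_piMoebiusConv {R : Type*} [CommRing R] (f : (ι → ℕ) → R) {n : ℕ}
    (hn : n ≠ 0) (x : ι → ℤ) :
    f (fun i => Int.gcd (x i) n) =
      ∑ d ∈ Fintype.piFinset (fun _ => n.divisors) with ∀ i, (d i : ℤ) ∣ x i,
        piMoebiusConv f d := by
  rw [← sum_piFinset_divisors_piMoebiusConv f fun _ =>
    Int.gcd_ne_zero_right (Int.natCast_ne_zero.2 hn)]
  congr 1
  ext d
  simp only [Fintype.mem_piFinset, mem_filter, Nat.mem_divisors_intGcd_iff hn, forall_and]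

end MoebiusInversion

namespace Nat

theorem count_mul_of_periodic {p : ℕ → Prop} [DecidablePred p] {L : ℕ}
    (hp : Function.Periodic p L) (m : ℕ) : count p (L * m) = m * count p L := by
  induction m with
  | zero => simp
  | succ m ih =>
    have hshift : (fun k => p (L * m + k)) = p :=
      funext fun k => by simpa [add_comm, mul_comm] using hp.nat_mul m k
    rw [Nat.mul_succ, count_add, ih, succ_mul]
    simp only [hshift]

theorem card_filter_Icc_mul_of_periodic {p : ℕ → Prop} [DecidablePred p] {L n : ℕ}
    (hp : Function.Periodic p L) (hLn : L ∣ n) :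
    #{a ∈ Icc 1 n | p a} * L = n * #{x ∈ range L | p x} := by
  obtain ⟨m, rfl⟩ := hLn
  have hpm : Function.Periodic p (L * m) := by simpa [mul_comm] using hp.nat_mul m
  rw [← Ico_add_one_right_eq_Icc, add_comm (L * m) 1, filter_Ico_card_eq_of_periodic 1 _ p hpm,
    count_mul_of_periodic hp, count_eq_card_filter_range]
  ring

end Nat

theorem Polynomial.dvd_eval_add_iff {R : Type*} [CommRing R] (p : Polynomial R) {d L : R}
    (h : d ∣ L) (x : R) : d ∣ p.eval (x + L) ↔ d ∣ p.eval x :=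
  dvd_iff_dvd_of_dvd_sub (h.trans (by simpa using p.sub_dvd_eval_sub (x + L) x))

theorem periodic_forall_dvd_eval {ι : Type*} (P : ι → Polynomial ℤ) {d : ι → ℕ} {L : ℕ}
    (hdL : ∀ i, d i ∣ L) :
    Function.Periodic (fun x : ℕ => ∀ i, (d i : ℤ) ∣ (P i).eval (x : ℤ)) L := fun x => by
  simp only [Nat.cast_add]
  exact propext <| forall_congr' fun i =>
    (P i).dvd_eval_add_iff (Int.natCast_dvd_natCast.2 (hdL i)) x

theorem menon_sum_convolution_formula (r n : ℕ) (hn : 0 < n)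
    (f : (Fin r → ℕ) → ℂ) (P : Fin r → Polynomial ℤ) :
    ∑ a ∈ Finset.Icc 1 n, f (fun i => Int.gcd ((P i).eval (a : ℤ)) (n : ℤ))
      = n * ∑ d ∈ Fintype.piFinset (fun _ : Fin r => n.divisors),
          ((∑ e ∈ Fintype.piFinset (fun i => (d i).divisors),
              (∏ i, (ArithmeticFunction.moebius (e i) : ℂ)) * f (fun i => d i / e i)) /
            ((((Finset.univ : Finset (Fin r)).lcm d : ℕ) : ℂ))) *
          (((Finset.range ((Finset.univ : Finset (Fin r)).lcm d)).filter
              (fun x : ℕ => ∀ i, ((d i : ℕ) : ℤ) ∣ (P i).eval (x : ℤ))).card : ℂ) := by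
  have hn0 : n ≠ 0 := hn.ne'
  calc ∑ a ∈ Finset.Icc 1 n, f (fun i => Int.gcd ((P i).eval (a : ℤ)) (n : ℤ))
      = ∑ a ∈ Icc 1 n, ∑ d ∈ Fintype.piFinset (fun _ : Fin r => n.divisors) with
          ∀ i, (d i : ℤ) ∣ (P i).eval (a : ℤ), piMoebiusConv f d := sum_congr rfl fun a _ => by
            convert apply_intGcd_eq_sum_piMoebiusConv f hn0 fun i => (P i).eval (a : ℤ)
    _ = ∑ d ∈ Fintype.piFinset (fun _ : Fin r => n.divisors),
          (#{a ∈ Icc 1 n | ∀ i, (d i : ℤ) ∣ (P i).eval ((a : ℕ) : ℤ)} : ℂ) * piMoebiusConv f d := by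
      simp only [sum_filter, natCast_card_filter, sum_mul, ite_mul, one_mul, zero_mul]
      exact sum_comm
    _ = _ := by
      rw [mul_sum]
      refine sum_congr rfl fun d hd => ?_
      have hdn i : d i ∣ n := Nat.dvd_of_mem_divisors (Fintype.mem_piFinset.1 hd i)
      have hLn : univ.lcm d ∣ n := Finset.lcm_dvd fun i _ => hdn i
      have hL : ((univ.lcm d : ℕ) : ℂ) ≠ 0 :=
        Nat.cast_ne_zero.2 (ne_zero_of_dvd_ne_zero hn0 hLn)
      have hcount := Nat.card_filter_Icc_mul_of_periodic
        (periodic_forall_dvd_eval P fun i => dvd_lcm (mem_univ i)) hLn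
      change _ = _ * (piMoebiusConv f d / _ * _)
      field_simp
      rw [mul_right_comm, ← Nat.cast_mul, hcount]
      push_cast
      ring
end
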